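/- arXiv:2510.27450 — 5 statements merged into one kernel-verified Lean document; each statement's English description precedes it below -/
import Mathlib

section
/- Let M be a right R-module that is pure extending, and let M = N ⊕ N' be a direct sum decomposition. Then N is pure extending. -/
/-!
Purity is transitive and direct summands are pure, so a pure submodule `P` of `N` is pure in
`M`, and then so is `P ⊕ N'`. Let `P ⊕ N'` be essential in a summand `D` with complement `C`. As `N' ≤ D`,
the modular law gives `D = N' ⊕ (D ∩ N)`, so `D ∩ N` is a summand of `N` with complement
`N ∩ (N' + C)`, and pulling back along `N ↪ M` shows `P` is essential in it.
-/

universe u v w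

/-- `I • P` realized as the span of products `r • p`, `r ∈ I`, `p ∈ P`. -/
def idealSMul {R : Type u} [Ring R] {M : Type v} [AddCommGroup M] [Module R M]
    (I : Ideal R) (N : Submodule R M) : Submodule R M :=
  Submodule.span R {x | ∃ r ∈ I, ∃ n ∈ N, r • n = x}

/-- A submodule `P ≤ M` is pure if `I P = I M ⊓ P` for every finitely generated ideal `I`. -/
def IsPureSubmodule {R : Type u} [Ring R] {M : Type v} [AddCommGroup M] [Module R M]
    (P : Submodule R M) : Prop :=
  ∀ I : Ideal R, I.FG → idealSMul I P = idealSMul I (⊤ : Submodule R M) ⊓ P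

/-- `P` is an essential submodule of `D`. -/
def IsEssentialIn {R : Type u} [Ring R] {M : Type v} [AddCommGroup M] [Module R M]
    (P D : Submodule R M) : Prop :=
  P ≤ D ∧ ∀ X : Submodule R M, X ≤ D → X ≠ ⊥ → X ⊓ P ≠ ⊥

/-- `D` is a direct summand of `M`. -/
def IsDirectSummand {R : Type u} [Ring R] {M : Type v} [AddCommGroup M] [Module R M]
    (D : Submodule R M) : Prop :=
  ∃ C : Submodule R M, IsCompl D C

/-- `M` is pure extending: every pure submodule is essential in a direct summand. -/
def PureExtending (R : Type u) [Ring R] (M : Type v) [AddCommGroup M] [Module R M] : Prop :=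
  ∀ P : Submodule R M, IsPureSubmodule P →
    ∃ D : Submodule R M, IsDirectSummand D ∧ IsEssentialIn P D

section

variable {R : Type u} [Ring R] {M : Type v} [AddCommGroup M] [Module R M]
  {M₂ : Type w} [AddCommGroup M₂] [Module R M₂]

theorem idealSMul_le (I : Ideal R) (A : Submodule R M) : idealSMul I A ≤ A :=
  Submodule.span_le.2 fun _ ⟨r, _, _, hn, hx⟩ => hx ▸ A.smul_mem r hn

theorem idealSMul_mono (I : Ideal R) {A B : Submodule R M} (hAB : A ≤ B) :
    idealSMul I A ≤ idealSMul I B :=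
  Submodule.span_mono fun _ ⟨r, hr, n, hn, hx⟩ => ⟨r, hr, n, hAB hn, hx⟩

theorem idealSMul_sup (I : Ideal R) (A B : Submodule R M) :
    idealSMul I (A ⊔ B) = idealSMul I A ⊔ idealSMul I B := by
  refine le_antisymm ?_ (sup_le (idealSMul_mono I le_sup_left) (idealSMul_mono I le_sup_right))
  refine Submodule.span_le.2 ?_
  rintro _ ⟨r, hr, _, hn, rfl⟩
  obtain ⟨a, ha, b, hb, rfl⟩ := Submodule.mem_sup.1 hn
  rw [smul_add]
  exact Submodule.add_mem_sup (Submodule.subset_span ⟨r, hr, a, ha, rfl⟩)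
    (Submodule.subset_span ⟨r, hr, b, hb, rfl⟩)

theorem idealSMul_map (I : Ideal R) (f : M →ₗ[R] M₂) (A : Submodule R M) :
    idealSMul I (A.map f) = (idealSMul I A).map f := by
  rw [idealSMul, idealSMul, Submodule.map_span]
  congr 1
  ext x
  constructor
  · rintro ⟨r, hr, _, ⟨m, hm, rfl⟩, rfl⟩
    exact ⟨r • m, ⟨r, hr, m, hm, rfl⟩, map_smul f r m⟩
  · rintro ⟨_, ⟨r, hr, m, hm, rfl⟩, rfl⟩
    exact ⟨r, hr, f m, ⟨m, hm, rfl⟩, (map_smul f r m).symm⟩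

theorem idealSMul_top_of_isCompl (I : Ideal R) {N N' : Submodule R M} (h : IsCompl N N') :
    idealSMul I ⊤ = idealSMul I N ⊔ idealSMul I N' := by
  rw [← h.sup_eq_top, idealSMul_sup]

theorem IsPureSubmodule.map_subtype {N : Submodule R M} {P : Submodule R N}
    (hP : IsPureSubmodule P) (hN : IsPureSubmodule N) : IsPureSubmodule (P.map N.subtype) := by
  intro I hI
  rw [idealSMul_map, hP I hI, Submodule.map_inf _ N.injective_subtype, ← idealSMul_map,
    Submodule.map_subtype_top, hN I hI, inf_assoc, inf_of_le_right (Submodule.map_subtype_le N P)]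

theorem IsCompl.isPureSubmodule {N N' : Submodule R M} (h : IsCompl N N') :
    IsPureSubmodule N := by
  intro I _
  rw [idealSMul_top_of_isCompl I h, sup_inf_assoc_of_le _ (idealSMul_le I N),
    (h.symm.disjoint.mono_left (idealSMul_le I N')).eq_bot, sup_bot_eq]

theorem IsPureSubmodule.sup_of_isCompl {N N' P : Submodule R M} (hP : IsPureSubmodule P)
    (hPN : P ≤ N) (h : IsCompl N N') : IsPureSubmodule (P ⊔ N') := by
  intro I hI
  refine le_antisymm (le_inf (idealSMul_mono I le_top) (idealSMul_le I _)) ?_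
  have hN : N ⊓ (P ⊔ N') = P := by
    rw [sup_comm, ← inf_sup_assoc_of_le _ hPN, h.inf_eq_bot, bot_sup_eq]
  have hIN : idealSMul I N ⊓ (P ⊔ N') ≤ idealSMul I P := by
    calc idealSMul I N ⊓ (P ⊔ N') ≤ idealSMul I ⊤ ⊓ (N ⊓ (P ⊔ N')) :=
          le_inf (inf_le_left.trans (idealSMul_mono I le_top))
            (inf_le_inf_right _ (idealSMul_le I N))
      _ = idealSMul I P := by rw [hN, hP I hI]
  rw [idealSMul_top_of_isCompl I h, sup_comm,
    sup_inf_assoc_of_le _ ((idealSMul_le I N').trans le_sup_right)]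
  exact sup_le (idealSMul_mono I le_sup_right) (hIN.trans (idealSMul_mono I le_sup_left))

theorem IsEssentialIn.comap_of_injective {A B : Submodule R M} (hAB : IsEssentialIn A B) {f : M₂ →ₗ[R] M} (hf : Function.Injective f) :
    IsEssentialIn (A.comap f) (B.comap f) := by
  refine ⟨Submodule.comap_mono hAB.1, fun X hXB hX => ?_⟩
  have hfX : X.map f ≠ ⊥ := fun h0 =>
    hX (Submodule.map_injective_of_injective hf (h0.trans (Submodule.map_bot f).symm))
  obtain ⟨_, ⟨⟨x, hxX, rfl⟩, hxA⟩, hx⟩ :=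
    Submodule.exists_mem_ne_zero_of_ne_bot (hAB.2 _ (Submodule.map_le_iff_le_comap.2 hXB) hfX)
  exact (Submodule.ne_bot_iff _).2 ⟨x, ⟨hxX, hxA⟩, fun h0 => hx (by rw [h0, map_zero])⟩

theorem IsCompl.isCompl_comap_subtype_of_le {N N' D C : Submodule R M} (hDC : IsCompl D C)
    (h : IsCompl N N') (hN'D : N' ≤ D) :
    IsCompl (D.comap N.subtype) ((N' ⊔ C).comap N.subtype) := by
  have hDN : IsCompl (D ⊓ N) (N' ⊔ C) := by
    refine Disjoint.isCompl_sup_right_of_isCompl_sup_left (h.disjoint.mono_left inf_le_right) ?_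
    rwa [inf_sup_assoc_of_le _ hN'D, h.sup_eq_top, inf_top_eq]
  have := Submodule.isCompl_comap_subtype_of_isCompl_of_le hDN inf_le_right
  rwa [Submodule.comap_inf, Submodule.comap_subtype_self, inf_top_eq] at this

end

/-- a direct summand of a pure extending module is pure extending. -/
theorem stmt_0 {R : Type u} [Ring R] {M : Type v} [AddCommGroup M] [Module R M]
    (hM : PureExtending R M) (N N' : Submodule R M) (h : IsCompl N N') :
    PureExtending R ↥N := by
  intro P hP
  have hQ : IsPureSubmodule (P.map N.subtype ⊔ N') :=
    (hP.map_subtype h.isPureSubmodule).sup_of_isCompl (Submodule.map_subtype_le N P) h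
  obtain ⟨D, ⟨C, hDC⟩, hQD⟩ := hM _ hQ
  refine ⟨D.comap N.subtype, ⟨_, hDC.isCompl_comap_subtype_of_le h (le_sup_right.trans hQD.1)⟩, ?_⟩
  have hQN : (P.map N.subtype ⊔ N').comap N.subtype = P :=
    Submodule.comap_map_sup_of_comap_le
      ((Submodule.disjoint_iff_comap_eq_bot.1 h.disjoint).trans_le bot_le)
  simpa only [hQN] using hQD.comap_of_injective N.injective_subtype
end

section
/- Let R be a ring such that every pure-injective right R-module is projective. Then R is semisimple. -/
universe u v w

/-- `E` is pure-injective: every pure embedding of `E` into a module splits. -/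
def PureInjective (R : Type u) [Ring R] (E : Type v) [AddCommGroup E] [Module R E] : Prop :=
  ∀ (X : Type v) [AddCommGroup X] [Module R X] (i : E →ₗ[R] X),
    Function.Injective i → IsPureSubmodule (LinearMap.range i) →
      ∃ r : X →ₗ[R] E, r ∘ₗ i = LinearMap.id

namespace Stmt10Aux

variable {R : Type u} [Ring R]

/-- The largest two-sided ideal contained in the left ideal `L`. -/
def corP (L : Submodule R R) : Submodule R R where
  carrier := {r | ∀ s, r * s ∈ L}
  add_mem' := by
    intro a b ha hb s
    rw [add_mul]; exact L.add_mem (ha s) (hb s)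
  zero_mem' := by
    intro s; rw [zero_mul]; exact L.zero_mem
  smul_mem' := by
    intro c a ha s
    rw [smul_eq_mul, mul_assoc]
    exact L.smul_mem c (ha s)

lemma mem_corP {L : Submodule R R} {r : R} : r ∈ corP L ↔ ∀ s, r * s ∈ L := Iff.rfl

lemma corP_le {L : Submodule R R} : corP L ≤ L := fun r hr => by simpa using hr 1

lemma corP_mul_right {L : Submodule R R} {p : R} (hp : p ∈ corP L) (t : R) :
    p * t ∈ corP L := fun s => by rw [mul_assoc]; exact hp _

/-- `P`-torsion submodule. -/
def tors (P : Submodule R R) (hP2 : ∀ p ∈ P, ∀ t, p * t ∈ P)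
    (E : Type w) [AddCommGroup E] [Module R E] : Submodule R E where
  carrier := {e | ∀ p ∈ P, p • e = 0}
  add_mem' := by
    intro a b ha hb p hp
    rw [smul_add, ha p hp, hb p hp, add_zero]
  zero_mem' := by intro p hp; rw [smul_zero]
  smul_mem' := by
    intro c e he p hp
    rw [← mul_smul]
    exact he (p * c) (hP2 p hp c)


lemma smul_mem_idealSMul (I : Ideal R) {M : Type w} [AddCommGroup M] [Module R M]
    (N : Submodule R M) {r : R} (hr : r ∈ I) {n : M} (hn : n ∈ N) :
    r • n ∈ idealSMul I N :=
  Submodule.subset_span ⟨r, hr, n, hn, rfl⟩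

/-- Key purity lemma: if `E` is killed by `P` and `i` is a pure embedding, then
`i e ∈ P • X` forces `e = 0`. -/
lemma eq_zero_of_mem_idealSMul_pure {E : Type v} {X : Type w}
    [AddCommGroup E] [Module R E] [AddCommGroup X] [Module R X]
    (i : E →ₗ[R] X) (hi : Function.Injective i)
    (hpure : IsPureSubmodule (LinearMap.range i)) (P : Submodule R R)
    (hkill : ∀ p ∈ P, ∀ e : E, p • e = 0) {e : E}
    (he : i e ∈ idealSMul P (⊤ : Submodule R X)) : e = 0 := by
  rw [idealSMul, Submodule.mem_span_set'] at he
  obtain ⟨n, f, g, hsum⟩ := he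
  have hg : ∀ k, ∃ r ∈ P, ∃ m ∈ (⊤ : Submodule R X), r • m = (g k : X) := fun k => (g k).2
  choose p hpP y hyT hpy using hg
  set I₀ : Ideal R := Submodule.span R (Set.range fun k => f k * p k) with hI₀
  have hI₀fg : I₀.FG := Submodule.fg_span (Set.finite_range _)
  have hmem : i e ∈ idealSMul I₀ (⊤ : Submodule R X) := by
    rw [← hsum]
    apply Submodule.sum_mem
    intro k _
    have h1 : f k • (g k : X) = (f k * p k) • y k := by rw [← hpy k, smul_smul]
    rw [h1]
    exact smul_mem_idealSMul I₀ (⊤ : Submodule R X) (Submodule.subset_span (Set.mem_range_self k)) Submodule.mem_top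
  have h2 : i e ∈ idealSMul I₀ (LinearMap.range i) := by
    rw [hpure I₀ hI₀fg]
    exact ⟨hmem, ⟨e, rfl⟩⟩
  have h3 : idealSMul I₀ (LinearMap.range i) ≤ ⊥ := by
    rw [idealSMul, Submodule.span_le]
    rintro x ⟨r, hr, m, ⟨e', rfl⟩, rfl⟩
    have hre : r • e' = 0 := by
      have hker : I₀ ≤ LinearMap.ker (LinearMap.toSpanSingleton R E e') := by
        rw [hI₀, Submodule.span_le]
        rintro s ⟨k, rfl⟩
        rw [SetLike.mem_coe, LinearMap.mem_ker, LinearMap.toSpanSingleton_apply,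
          mul_smul, hkill (p k) (hpP k) e', smul_zero]
      have := hker hr
      rwa [LinearMap.mem_ker, LinearMap.toSpanSingleton_apply] at this
    simp only [SetLike.mem_coe, Submodule.mem_bot, ← map_smul, hre, map_zero]
  have h4 : i e = 0 := by simpa using h3 h2
  exact hi (by rw [h4, map_zero])

/-- Injective modules are pure-injective. -/
lemma pureInjective_of_injective {E : Type u} [AddCommGroup E] [Module R E]
    (hE : Module.Injective R E) : PureInjective R E := by
  intro X _ _ i hi _
  obtain ⟨r, hr⟩ := hE.out i hi LinearMap.id
  exact ⟨r, by ext e; exact hr e⟩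

/-- Every module embeds in an injective module. -/
lemma exists_embedding_injective (M : Type u) [AddCommGroup M] [Module R M] :
    ∃ (E : Type u) (_ : AddCommGroup E) (_ : Module R E) (f : M →ₗ[R] E),
      Module.Injective R E ∧ Function.Injective f := by
  let Z : ModuleCat.{u} R := ModuleCat.of R M
  let E := CategoryTheory.Injective.under Z
  have hinj : CategoryTheory.Injective (ModuleCat.of R E) := by
    rw [ModuleCat.of_coe]
    infer_instance
  refine ⟨E, inferInstance, inferInstance, (CategoryTheory.Injective.ι Z).hom, ?_, ?_⟩
  · exact Module.injective_module_of_injective_object R E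
  · exact (ModuleCat.mono_iff_injective (CategoryTheory.Injective.ι Z)).mp inferInstance


lemma tors_kills {P : Submodule R R} {hP2 : ∀ p ∈ P, ∀ t, p * t ∈ P}
    {E : Type w} [AddCommGroup E] [Module R E] :
    ∀ p ∈ P, ∀ e : ↥(tors P hP2 E), p • e = 0 := by
  intro p hp e
  ext
  exact e.2 p hp

lemma quot_idealSMul_kills {P : Submodule R R} {X : Type w} [AddCommGroup X] [Module R X] :
    ∀ p ∈ P, ∀ x : X ⧸ idealSMul P (⊤ : Submodule R X), p • x = 0 := by
  intro p hp x
  obtain ⟨y, rfl⟩ := Submodule.Quotient.mk_surjective _ x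
  rw [← Submodule.Quotient.mk_smul, Submodule.Quotient.mk_eq_zero]
  exact smul_mem_idealSMul P ⊤ hp Submodule.mem_top

/-- The `P`-torsion part of an injective module is pure-injective. -/
lemma pureInjective_tors {E : Type u} [AddCommGroup E] [Module R E]
    (hE : Module.Injective R E) {P : Submodule R R}
    (hP2 : ∀ p ∈ P, ∀ t, p * t ∈ P) : PureInjective R ↥(tors P hP2 E) := by
  intro X _ _ i hi hpure
  set PX := idealSMul P (⊤ : Submodule R X) with hPX
  set ib : ↥(tors P hP2 E) →ₗ[R] X ⧸ PX := PX.mkQ ∘ₗ i with hib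
  have hkillE' : ∀ p ∈ P, ∀ e : ↥(tors P hP2 E), p • e = 0 := tors_kills
  have hibinj : Function.Injective ib := by
    have h0 : ∀ e : ↥(tors P hP2 E), ib e = 0 → e = 0 := by
      intro e he
      apply eq_zero_of_mem_idealSMul_pure i hi hpure P hkillE'
      rw [hib] at he
      simpa [Submodule.Quotient.mk_eq_zero] using he
    intro a b hab
    have : a - b = 0 := h0 _ (by rw [map_sub, hab, sub_self])
    exact sub_eq_zero.mp this
  set eqv := LinearEquiv.ofInjective ib hibinj with heqv
  obtain ⟨g, hg⟩ := hE.out (LinearMap.range ib).subtype (Submodule.injective_subtype _)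
    ((tors P hP2 E).subtype ∘ₗ (eqv.symm.toLinearMap))
  have hgtor : ∀ x : X ⧸ PX, g x ∈ tors P hP2 E := by
    intro x p hp
    rw [← map_smul, quot_idealSMul_kills p hp x, map_zero]
  refine ⟨(g.codRestrict (tors P hP2 E) hgtor) ∘ₗ PX.mkQ, ?_⟩
  apply LinearMap.ext
  intro e
  apply Subtype.ext
  have h2 : g (ib e) = (e : E) := by
    have h3 := hg ⟨ib e, LinearMap.mem_range_self ib e⟩
    simp only [Submodule.coe_subtype, LinearMap.coe_comp, Function.comp_apply,
      LinearEquiv.coe_coe] at h3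
    have h4 : eqv.symm ⟨ib e, LinearMap.mem_range_self ib e⟩ = e := by
      apply eqv.injective
      rw [LinearEquiv.apply_symm_apply]
      ext
      rw [heqv, LinearEquiv.ofInjective_apply]
    rw [h3]
    exact congrArg _ h4
  exact h2


/-- Coordinates: under the main hypothesis, every coatom `L₁` above a right-absorbing `P`
is an annihilator ideal modulo `P`. -/
lemma tool_C (h : ∀ (E : Type u) [AddCommGroup E] [Module R E],
      PureInjective R E → Module.Projective R E)
    {P L₁ : Submodule R R} (hP2 : ∀ p ∈ P, ∀ t, p * t ∈ P)
    (hPL : P ≤ L₁) :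
    ∃ (ι : Type u) (z : ι → R), ∀ r : R, r ∈ L₁ ↔ ∀ b : ι, r * z b ∈ P := by
  obtain ⟨E, _, _, f, hEinj, hf⟩ := exists_embedding_injective (R := R) (R ⧸ L₁)
  have hkillC : ∀ p ∈ P, ∀ c : R ⧸ L₁, p • c = 0 := by
    intro p hp c
    obtain ⟨s, rfl⟩ := Submodule.Quotient.mk_surjective _ c
    rw [← Submodule.Quotient.mk_smul, Submodule.Quotient.mk_eq_zero]
    exact hPL (hP2 p hp s)
  have hftor : ∀ c : R ⧸ L₁, f c ∈ tors P hP2 E := by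
    intro c p hp
    rw [← map_smul, hkillC p hp c, map_zero]
  set j : (R ⧸ L₁) →ₗ[R] ↥(tors P hP2 E) := f.codRestrict _ hftor with hj
  have hjinj : Function.Injective j := by
    intro a b hab
    apply hf
    exact congrArg Subtype.val hab
  have hproj : Module.Projective R ↥(tors P hP2 E) := h _ (pureInjective_tors hEinj hP2)
  obtain ⟨sec, hsec⟩ := Module.projective_def.mp hproj
  set z := sec (j (Submodule.Quotient.mk 1)) with hz
  refine ⟨↥(tors P hP2 E), fun b => z b, fun r => ⟨?_, ?_⟩⟩
  · intro hr b
    have h0 : r • (j (Submodule.Quotient.mk (1:R))) = 0 := by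
      rw [← map_smul, ← Submodule.Quotient.mk_smul, smul_eq_mul, mul_one,
        (Submodule.Quotient.mk_eq_zero _).mpr hr, map_zero]
    have h1 : r • z = 0 := by rw [hz, ← map_smul, h0, map_zero]
    have h2 : (r • z) b = 0 := by rw [h1]; rfl
    rw [Finsupp.smul_apply, smul_eq_mul] at h2
    rw [h2]
    exact P.zero_mem
  · intro hb
    have hz0 : Finsupp.linearCombination R id (r • z) = 0 := by
      rw [Finsupp.linearCombination_apply, Finsupp.sum]
      apply Finset.sum_eq_zero
      intro b _
      have hcoef : (r • z) b ∈ P := by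
        rw [Finsupp.smul_apply, smul_eq_mul]; exact hb b
      show ((r • z) b) • (id b) = 0
      exact tors_kills _ hcoef b
    have h0 : r • (j (Submodule.Quotient.mk (1:R))) = 0 := by
      have := hsec (r • (j (Submodule.Quotient.mk (1:R))))
      rw [map_smul, ← hz, hz0] at this
      exact this.symm
    have h1 : j (Submodule.Quotient.mk r) = 0 := by
      rw [← h0, ← map_smul, ← Submodule.Quotient.mk_smul, smul_eq_mul, mul_one]
    rw [← Submodule.Quotient.mk_eq_zero L₁]
    apply hjinj
    rw [h1, map_zero]


/-- The image of an atom under a linear map is an atom or `⊥`. -/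
lemma map_atom {M : Type v} {N : Type w} [AddCommGroup M] [Module R M]
    [AddCommGroup N] [Module R N] (f : M →ₗ[R] N) {V : Submodule R M} (hV : IsAtom V) :
    Submodule.map f V = ⊥ ∨ IsAtom (Submodule.map f V) := by
  by_cases h0 : Submodule.map f V = ⊥
  · exact Or.inl h0
  refine Or.inr ⟨h0, ?_⟩
  intro W hW
  have hVc : V ⊓ Submodule.comap f W ≠ V := by
    intro he
    have : V ≤ Submodule.comap f W := he ▸ inf_le_right
    exact (show W < Submodule.map f V from hW).not_ge (Submodule.map_le_iff_le_comap.mpr this)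
  have hbot : V ⊓ Submodule.comap f W = ⊥ :=
    hV.2 _ (lt_of_le_of_ne inf_le_left hVc)
  rw [eq_bot_iff]
  intro w hw
  obtain ⟨v, hv, rfl⟩ := (show W < Submodule.map f V from hW).le hw
  have : v ∈ V ⊓ Submodule.comap f W := ⟨hv, hw⟩
  rw [hbot] at this
  simp only [Submodule.mem_bot] at this
  simp [this]

/-- The socle (sup of atoms). -/
def soc (R : Type u) [Ring R] (M : Type v) [AddCommGroup M] [Module R M] : Submodule R M :=
  sSup {V : Submodule R M | IsAtom V}

lemma map_soc_le {M : Type v} {N : Type w} [AddCommGroup M] [Module R M]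
    [AddCommGroup N] [Module R N] (f : M →ₗ[R] N) :
    Submodule.map f (soc R M) ≤ soc R N := by
  rw [soc, sSup_eq_iSup', Submodule.map_iSup]
  apply iSup_le
  rintro ⟨V, hV⟩
  rcases map_atom f hV with h | h
  · rw [h]; exact bot_le
  · exact le_sSup h

lemma soc_stable {M : Type v} [AddCommGroup M] [Module R M] (f : M →ₗ[R] M)
    {m : M} (hm : m ∈ soc R M) : f m ∈ soc R M :=
  map_soc_le f (Submodule.mem_map_of_mem hm)

variable (P : Submodule R R) (hP2 : ∀ p ∈ P, ∀ t, p * t ∈ P)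

/-- right multiplication by `t` on `R ⧸ P`. -/
def rmul (t : R) : (R ⧸ P) →ₗ[R] (R ⧸ P) :=
  Submodule.mapQ P P (LinearMap.toSpanSingleton R R t)
    (fun p hp => by
      rw [Submodule.mem_comap, LinearMap.toSpanSingleton_apply, smul_eq_mul]
      exact hP2 p hp t)

lemma rmul_mk (t r : R) :
    rmul P hP2 t (Submodule.Quotient.mk r) = Submodule.Quotient.mk (r * t) := by
  rw [rmul, Submodule.mapQ_apply, LinearMap.toSpanSingleton_apply, smul_eq_mul]

/-- Elements annihilating the socle of `R ⧸ P` from the right. -/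
def rann : Submodule R R where
  carrier := {t | ∀ m ∈ soc R (R ⧸ P), rmul P hP2 t m = 0}
  add_mem' := by
    intro a b ha hb m hm
    obtain ⟨r, rfl⟩ := Submodule.Quotient.mk_surjective _ m
    have h1 := ha _ hm
    have h2 := hb _ hm
    rw [rmul_mk] at h1 h2
    rw [rmul_mk, mul_add, Submodule.Quotient.mk_add, h1, h2, add_zero]
  zero_mem' := by
    intro m hm
    obtain ⟨r, rfl⟩ := Submodule.Quotient.mk_surjective _ m
    rw [rmul_mk, mul_zero]
    exact (Submodule.Quotient.mk_eq_zero _).mpr P.zero_mem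
  smul_mem' := by
    intro c t ht m hm
    obtain ⟨r, rfl⟩ := Submodule.Quotient.mk_surjective _ m
    rw [smul_eq_mul, rmul_mk, show r * (c * t) = (r * c) * t by rw [mul_assoc]]
    have h1 : (Submodule.Quotient.mk (r * c) : R ⧸ P) ∈ soc R (R ⧸ P) := by
      have := soc_stable (rmul P hP2 c) hm
      rwa [rmul_mk] at this
    have h2 := ht _ h1
    rwa [rmul_mk] at h2

lemma mem_rann {t : R} : t ∈ rann P hP2 ↔ ∀ m ∈ soc R (R ⧸ P), rmul P hP2 t m = 0 := Iff.rfl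

lemma rann_mul_right {t : R} (ht : t ∈ rann P hP2) (s : R) : t * s ∈ rann P hP2 := by
  intro m hm
  obtain ⟨r, rfl⟩ := Submodule.Quotient.mk_surjective _ m
  have h1 := ht _ hm
  rw [rmul_mk] at h1
  rw [rmul_mk, show r * (t * s) = (r * t) * s by rw [mul_assoc], ← rmul_mk P hP2 s, h1]
  exact map_zero _


/-- `corP L` is closed under right multiplication (packaged). -/
def corP2 (L : Submodule R R) : ∀ p ∈ corP L, ∀ t, p * t ∈ corP L :=
  fun _ hp t => corP_mul_right hp t

/-- KEY2 : the right annihilator of the socle of `R ⧸ corP L` is contained in `corP L`. -/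
lemma rann_le_corP (h : ∀ (E : Type u) [AddCommGroup E] [Module R E],
      PureInjective R E → Module.Projective R E)
    {L : Submodule R R} (hL : IsCoatom L) :
    rann (corP L) (corP2 L) ≤ corP L := by
  obtain ⟨ι, z, hz⟩ := tool_C h (corP2 L) corP_le
  have hb₀ : ∃ b₀, z b₀ ∉ corP L := by
    by_contra hno
    push_neg at hno
    refine absurd ?_ hL.1
    rw [eq_top_iff]
    intro r _
    refine (hz r).mpr (fun b => ?_)
    have := (corP L).smul_mem r (hno b)
    rwa [smul_eq_mul] at this
  obtain ⟨b₀, hx⟩ := hb₀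
  set x := z b₀ with hxdef
  set θ : R →ₗ[R] (R ⧸ corP L) := (corP L).mkQ ∘ₗ LinearMap.toSpanSingleton R R x with hθ
  have hθapp : ∀ r, θ r = Submodule.Quotient.mk (r * x) := by
    intro r
    rw [hθ]
    simp only [LinearMap.coe_comp, Function.comp_apply, LinearMap.toSpanSingleton_apply,
      smul_eq_mul, Submodule.mkQ_apply]
  have hker : LinearMap.ker θ = L := by
    have hle : L ≤ LinearMap.ker θ := by
      intro r hr
      rw [LinearMap.mem_ker, hθapp, Submodule.Quotient.mk_eq_zero]
      exact (hz r).mp hr b₀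
    have hne : LinearMap.ker θ ≠ ⊤ := by
      intro he
      have h1 : (1:R) ∈ LinearMap.ker θ := he ▸ Submodule.mem_top
      rw [LinearMap.mem_ker, hθapp, one_mul, Submodule.Quotient.mk_eq_zero] at h1
      exact hx h1
    rcases lt_or_eq_of_le hle with hlt | heq
    · exact absurd (hL.2 _ hlt) hne
    · exact heq.symm
  have hWsimple : IsSimpleModule R ↥(LinearMap.range θ) := by
    haveI h1 : IsSimpleModule R (R ⧸ L) := isSimpleModule_iff_isCoatom.mpr hL
    haveI h2 : IsSimpleModule R (R ⧸ LinearMap.ker θ) :=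
      IsSimpleModule.congr (Submodule.quotEquivOfEq (LinearMap.ker θ) L hker)
    exact IsSimpleModule.congr θ.quotKerEquivRange.symm
  have hWatom : IsAtom (LinearMap.range θ) := isSimpleModule_iff_isAtom.mp hWsimple
  have hWsoc : LinearMap.range θ ≤ soc R (R ⧸ corP L) := le_sSup hWatom
  have hVle : Submodule.map θ (rann (corP L) (corP2 L)) ≤ LinearMap.range θ :=
    LinearMap.map_le_range
  rcases lt_or_eq_of_le hVle with hlt | heq
  · have hVbot : Submodule.map θ (rann (corP L) (corP2 L)) = ⊥ := hWatom.2 _ hlt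
    intro t ht
    intro s
    have hts : t * s ∈ rann (corP L) (corP2 L) := rann_mul_right _ _ ht s
    have h0 : θ (t * s) = 0 := by
      have hmem : θ (t*s) ∈ Submodule.map θ (rann (corP L) (corP2 L)) :=
        Submodule.mem_map_of_mem hts
      rw [hVbot] at hmem
      simpa using hmem
    have : t * s ∈ LinearMap.ker θ := h0
    rwa [hker] at this
  · exfalso
    have h1 : θ 1 ∈ Submodule.map θ (rann (corP L) (corP2 L)) := by
      rw [heq]
      exact LinearMap.mem_range_self θ 1
    obtain ⟨t₁, ht₁, ht₁e⟩ := h1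
    have hd : x - t₁ * x ∈ corP L := by
      rw [hθapp, hθapp, one_mul] at ht₁e
      exact (Submodule.Quotient.eq _).mp ht₁e.symm
    apply hx
    intro s
    have hxst : x * s * t₁ ∈ corP L := by
      have hsoc : (Submodule.Quotient.mk (x * s) : R ⧸ corP L) ∈ soc R (R ⧸ corP L) := by
        have h2 : (Submodule.Quotient.mk x : R ⧸ corP L) ∈ soc R (R ⧸ corP L) := by
          apply hWsoc
          exact ⟨1, by rw [hθapp, one_mul]⟩
        have h3 := soc_stable (rmul (corP L) (corP2 L) s) h2
        rwa [rmul_mk] at h3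
      have h4 := ht₁ _ hsoc
      rw [rmul_mk] at h4
      rwa [Submodule.Quotient.mk_eq_zero] at h4
    have hmem : x * s * x ∈ corP L := by
      have hsplit : x * s * x = (x * s * t₁) * x + (x * s) * (x - t₁ * x) := by
        rw [mul_sub, ← mul_assoc]
        abel
      rw [hsplit]
      refine (corP L).add_mem (corP2 L _ hxst x) ?_
      have := (corP L).smul_mem (x*s) hd
      rwa [smul_eq_mul] at this
    have hfin : x * s ∈ LinearMap.ker θ := by
      rw [LinearMap.mem_ker, hθapp, Submodule.Quotient.mk_eq_zero]
      exact hmem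
    rwa [hker] at hfin


/-- KEY3 : the quotient `R ⧸ corP L` is a sum of simple modules. -/
lemma soc_quot_eq_top (h : ∀ (E : Type u) [AddCommGroup E] [Module R E],
      PureInjective R E → Module.Projective R E)
    {L : Submodule R R} (hL : IsCoatom L) :
    soc R (R ⧸ corP L) = ⊤ := by
  by_contra hne
  have hSig : Submodule.comap (corP L).mkQ (soc R (R ⧸ corP L)) ≠ ⊤ := by
    intro he
    apply hne
    rw [eq_top_iff]
    intro m _
    obtain ⟨r, rfl⟩ := Submodule.Quotient.mk_surjective _ m
    have : r ∈ Submodule.comap (corP L).mkQ (soc R (R ⧸ corP L)) := he ▸ Submodule.mem_top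
    exact this
  obtain ⟨L₁, hL₁max, hL₁⟩ := Ideal.exists_le_maximal _ hSig
  have hL₁c : IsCoatom L₁ := Ideal.isMaximal_def.mp hL₁max
  have hPL₁ : corP L ≤ L₁ := by
    refine le_trans ?_ hL₁
    intro p hp
    show (corP L).mkQ p ∈ soc R (R ⧸ corP L)
    have : (corP L).mkQ p = 0 := by
      rw [Submodule.mkQ_apply, Submodule.Quotient.mk_eq_zero]
      exact hp
    rw [this]
    exact Submodule.zero_mem _
  obtain ⟨ι, zz, hzz⟩ := tool_C h (corP2 L) hPL₁
  have hzT : ∀ b, zz b ∈ rann (corP L) (corP2 L) := by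
    intro b m hm
    obtain ⟨a, rfl⟩ := Submodule.Quotient.mk_surjective _ m
    have haL₁ : a ∈ L₁ := hL₁ hm
    have : a * zz b ∈ corP L := (hzz a).mp haL₁ b
    rw [rmul_mk, Submodule.Quotient.mk_eq_zero]
    exact this
  have hzP : ∀ b, zz b ∈ corP L := fun b => rann_le_corP h hL (hzT b)
  have : L₁ = ⊤ := by
    rw [eq_top_iff]
    intro r _
    refine (hzz r).mpr (fun b => ?_)
    have := (corP L).smul_mem r (hzP b)
    rwa [smul_eq_mul] at this
  exact hL₁c.1 this

/-- KEY4 : every module killed by `corP L` is a sum of simple modules. -/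
lemma killed_soc_eq_top (h : ∀ (E : Type u) [AddCommGroup E] [Module R E],
      PureInjective R E → Module.Projective R E)
    {L : Submodule R R} (hL : IsCoatom L) {N : Type v} [AddCommGroup N] [Module R N]
    (hN : ∀ p ∈ corP L, ∀ n : N, p • n = 0) :
    soc R N = ⊤ := by
  rw [Submodule.eq_top_iff']
  intro n
  set ψ : R →ₗ[R] N := LinearMap.toSpanSingleton R N n with hψ
  have hker : corP L ≤ LinearMap.ker ψ := by
    intro p hp
    rw [LinearMap.mem_ker, hψ, LinearMap.toSpanSingleton_apply]
    exact hN p hp n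
  set ψq := Submodule.liftQ (corP L) ψ hker with hψq
  have h1 : ψq (Submodule.Quotient.mk 1) = n := by
    rw [hψq, Submodule.liftQ_apply, hψ, LinearMap.toSpanSingleton_apply, one_smul]
  have h2 : (Submodule.Quotient.mk (1:R) : R ⧸ corP L) ∈ soc R (R ⧸ corP L) := by
    rw [soc_quot_eq_top h hL]
    exact Submodule.mem_top
  have h3 : n ∈ Submodule.map ψq (soc R (R ⧸ corP L)) :=
    ⟨_, h2, h1⟩
  exact map_soc_le ψq h3


/-- The simple module `R ⧸ L` is pure-injective, under the main hypothesis. -/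
lemma quot_pureInjective (h : ∀ (E : Type u) [AddCommGroup E] [Module R E],
      PureInjective R E → Module.Projective R E)
    {L : Submodule R R} (hL : IsCoatom L) : PureInjective R (R ⧸ L) := by
  intro X _ _ i hi hpure
  set PX := idealSMul (corP L) (⊤ : Submodule R X) with hPX
  have hkillS : ∀ p ∈ corP L, ∀ c : R ⧸ L, p • c = 0 := by
    intro p hp c
    obtain ⟨s, rfl⟩ := Submodule.Quotient.mk_surjective _ c
    rw [← Submodule.Quotient.mk_smul, Submodule.Quotient.mk_eq_zero, smul_eq_mul]
    exact hp s
  set ib : (R ⧸ L) →ₗ[R] X ⧸ PX := PX.mkQ ∘ₗ i with hib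
  have hibinj : Function.Injective ib := by
    have h0 : ∀ e : R ⧸ L, ib e = 0 → e = 0 := by
      intro e he
      apply eq_zero_of_mem_idealSMul_pure i hi hpure (corP L) hkillS
      rw [hib] at he
      simpa [Submodule.Quotient.mk_eq_zero] using he
    intro a b hab
    have : a - b = 0 := h0 _ (by rw [map_sub, hab, sub_self])
    exact sub_eq_zero.mp this
  have hsoc : soc R (X ⧸ PX) = ⊤ :=
    killed_soc_eq_top h hL (quot_idealSMul_kills)
  haveI : ComplementedLattice (Submodule R (X ⧸ PX)) := by
    apply complementedLattice_of_sSup_atoms_eq_top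
    exact hsoc
  obtain ⟨K, hK⟩ := exists_isCompl (LinearMap.range ib)
  set pr := Submodule.linearProjOfIsCompl _ K hK with hpr
  set eqv := LinearEquiv.ofInjective ib hibinj with heqv
  refine ⟨eqv.symm.toLinearMap ∘ₗ (pr ∘ₗ PX.mkQ), ?_⟩
  apply LinearMap.ext
  intro c
  have h1 : PX.mkQ (i c) = ib c := rfl
  show eqv.symm (pr (PX.mkQ (i c))) = c
  rw [h1]
  have h2 : pr (ib c) = eqv c := by
    have h3 : ib c = ((eqv c : ↥(LinearMap.range ib)) : X ⧸ PX) := by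
      rw [heqv]
      rfl
    rw [h3]
    exact Submodule.linearProjOfIsCompl_apply_left hK (eqv c)
  rw [h2, LinearEquiv.symm_apply_apply]

end Stmt10Aux

/-- if every pure-injective `R`-module is projective, then `R` is semisimple. -/
theorem stmt_10 {R : Type u} [Ring R]
    (h : ∀ (E : Type u) [AddCommGroup E] [Module R E],
      PureInjective R E → Module.Projective R E) :
    IsSemisimpleRing R := by
  have key : ∀ L : Submodule R R, IsCoatom L → ∃ A : Submodule R R, IsAtom A ∧ ¬ A ≤ L := by
    intro L hL
    have hproj : Module.Projective R (R ⧸ L) := h _ (Stmt10Aux.quot_pureInjective h hL)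
    obtain ⟨σ, hσ⟩ := Module.projective_lifting_property L.mkQ LinearMap.id
      (Submodule.mkQ_surjective L)
    have hσinj : Function.Injective σ := by
      intro a b hab
      have h1 : L.mkQ (σ a) = L.mkQ (σ b) := by rw [hab]
      have h2 := LinearMap.congr_fun hσ a
      have h3 := LinearMap.congr_fun hσ b
      simp only [LinearMap.coe_comp, Function.comp_apply, LinearMap.id_apply] at h2 h3
      rw [h2, h3] at h1
      exact h1
    refine ⟨LinearMap.range σ, ?_, ?_⟩
    · haveI h1 : IsSimpleModule R (R ⧸ L) := isSimpleModule_iff_isCoatom.mpr hL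
      haveI h2 : IsSimpleModule R ↥(LinearMap.range σ) :=
        IsSimpleModule.congr (LinearEquiv.ofInjective σ hσinj).symm
      exact isSimpleModule_iff_isAtom.mp h2
    · intro hle
      have hall : ∀ c : R ⧸ L, c = 0 := by
        intro c
        have h2 := LinearMap.congr_fun hσ c
        simp only [LinearMap.coe_comp, Function.comp_apply, LinearMap.id_apply] at h2
        have h3 : σ c ∈ L := hle (LinearMap.mem_range_self σ c)
        rw [← h2, Submodule.mkQ_apply, Submodule.Quotient.mk_eq_zero]
        exact h3
      have h4 : (Submodule.Quotient.mk (1:R) : R ⧸ L) = 0 := hall _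
      rw [Submodule.Quotient.mk_eq_zero] at h4
      refine hL.1 ?_
      rw [eq_top_iff]
      intro r _
      have := L.smul_mem r h4
      rwa [smul_eq_mul, mul_one] at this
  show IsSemisimpleModule R R
  rw [isSemisimpleModule_iff]
  apply complementedLattice_of_sSup_atoms_eq_top
  by_contra hne
  obtain ⟨L, hLmax, hle⟩ := Ideal.exists_le_maximal _ hne
  have hLc : IsCoatom L := Ideal.isMaximal_def.mp hLmax
  obtain ⟨A, hA, hAL⟩ := key L hLc
  exact hAL (le_trans (le_sSup (show A ∈ {a : Submodule R R | IsAtom a} from hA)) hle)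
end

section
/- If R is semisimple, then every right R-module is pure extending and projective; conversely, if every pure extending right R-module is projective, then R is semisimple. -/
universe u v w

/-- Every submodule is essential in itself. -/
lemma isEssentialIn_self {R : Type u} [Ring R] {M : Type v} [AddCommGroup M] [Module R M]
    (P : Submodule R M) : IsEssentialIn P P :=
  ⟨le_rfl, fun X hX hX0 => by rwa [inf_eq_left.mpr hX]⟩

/-- Over a semisimple module, every surjection onto `M` splits. -/
lemma exists_section {R : Type u} [Ring R] {N : Type v} {M : Type w}
    [AddCommGroup N] [Module R N] [AddCommGroup M] [Module R M] [IsSemisimpleModule R N]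
    (f : N →ₗ[R] M) (hf : Function.Surjective f) :
    ∃ g : M →ₗ[R] N, f.comp g = LinearMap.id := by
  obtain ⟨C, hC⟩ := exists_isCompl (LinearMap.ker f)
  have hinj : Function.Injective (f.comp C.subtype) := by
    intro x y hxy
    have : (x : N) - y ∈ LinearMap.ker f ⊓ C := by
      refine Submodule.mem_inf.mpr ⟨?_, sub_mem x.2 y.2⟩
      rw [LinearMap.mem_ker, map_sub, sub_eq_zero]
      exact hxy
    rw [hC.inf_eq_bot] at this
    exact Subtype.ext (by simpa [sub_eq_zero] using this)
  have hsurj : Function.Surjective (f.comp C.subtype) := by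
    intro m
    obtain ⟨n, rfl⟩ := hf m
    have : n ∈ LinearMap.ker f ⊔ C := by rw [hC.sup_eq_top]; trivial
    obtain ⟨k, hk, c, hc, rfl⟩ := Submodule.mem_sup.mp this
    exact ⟨⟨c, hc⟩, by simp [LinearMap.mem_ker.mp hk]⟩
  let e : C ≃ₗ[R] M := LinearEquiv.ofBijective (f.comp C.subtype) ⟨hinj, hsurj⟩
  refine ⟨C.subtype.comp (e.symm : M →ₗ[R] C), ?_⟩
  ext m
  exact e.apply_symm_apply m

/-- Every module over a semisimple ring is projective. -/
lemma projective_of_semisimple {R : Type u} [Ring R] [IsSemisimpleRing R]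
    (M : Type v) [AddCommGroup M] [Module R M] : Module.Projective R M := by
  obtain ⟨g, hg⟩ := exists_section (R := R) (N := M →₀ R) (M := M)
    (Finsupp.linearCombination R id) (Finsupp.linearCombination_id_surjective R M)
  exact Module.Projective.of_split g (Finsupp.linearCombination R id) hg

/-- if `R` is semisimple then every module is pure extending and projective;
conversely, if every pure extending module is projective, then `R` is semisimple. -/
theorem stmt_11 (R : Type u) [Ring R] :
    (IsSemisimpleRing R → ∀ (M : Type u) [AddCommGroup M] [Module R M],
      PureExtending R M ∧ Module.Projective R M) ∧
    ((∀ (M : Type u) [AddCommGroup M] [Module R M],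
      PureExtending R M → Module.Projective R M) → IsSemisimpleRing R) := by
  constructor
  · intro hss M _ _
    refine ⟨fun P _ => ?_, projective_of_semisimple M⟩
    obtain ⟨C, hC⟩ := exists_isCompl P
    exact ⟨P, ⟨C, hC⟩, isEssentialIn_self P⟩
  · intro h
    by_cases hR : Subsingleton R
    · exact { exists_isCompl := fun a => ⟨⊥, by
        constructor
        · simp
        · rw [codisjoint_iff]
          exact Subsingleton.elim _ _⟩ }
    have : Nontrivial R := not_subsingleton_iff_nontrivial.mp hR
    -- It suffices that the sup of simple submodules of R is ⊤.
    apply IsSemisimpleModule.of_sSup_simples_eq_top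
    by_contra hS
    obtain ⟨m, hm, hSm⟩ := Ideal.exists_le_maximal _ hS
    -- The quotient R ⧸ m is a simple module, hence trivially pure extending.
    haveI : IsSimpleModule R (R ⧸ m) :=
      isSimpleModule_iff_isCoatom.mpr ((Ideal.isMaximal_def).mp hm)
    have hpe : PureExtending R (R ⧸ m) := by
      intro P _
      rcases eq_bot_or_eq_top P with rfl | rfl
      · exact ⟨⊥, ⟨⊤, isCompl_bot_top⟩, isEssentialIn_self ⊥⟩
      · exact ⟨⊤, ⟨⊥, isCompl_top_bot⟩, isEssentialIn_self ⊤⟩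
    haveI hproj : Module.Projective R (R ⧸ m) := h (R ⧸ m) hpe
    -- Split the quotient map
    obtain ⟨s, hs⟩ := Module.projective_lifting_property m.mkQ
      (LinearMap.id : (R ⧸ m) →ₗ[R] (R ⧸ m)) (Submodule.mkQ_surjective m)
    have hsinj : Function.Injective s := by
      intro x y hxy
      have := congrArg m.mkQ hxy
      have hx := LinearMap.congr_fun hs x
      have hy := LinearMap.congr_fun hs y
      simp only [LinearMap.comp_apply, LinearMap.id_apply] at hx hy
      rwa [hx, hy] at this
    set T : Submodule R R := LinearMap.range s with hT
    -- T is simple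
    haveI hTsimple : IsSimpleModule R T :=
      IsSimpleModule.congr (LinearEquiv.ofInjective s hsinj).symm
    -- T ≤ sSup simples ≤ m
    have hTm : T ≤ m := le_trans (le_sSup (by exact hTsimple)) hSm
    -- but T ⊓ m = ⊥ and T ≠ ⊥
    have hTbot : T = ⊥ := by
      rw [eq_bot_iff]
      intro x hx
      obtain ⟨y, rfl⟩ := hx
      have hxm : s y ∈ m := hTm ⟨y, rfl⟩
      have h0 : m.mkQ (s y) = 0 := (Submodule.Quotient.mk_eq_zero m).mpr hxm
      have hy := LinearMap.congr_fun hs y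
      simp only [LinearMap.comp_apply, LinearMap.id_apply] at hy
      rw [hy] at h0
      simp [h0]
    have : Nontrivial T := IsSimpleModule.nontrivial R T
    exact absurd hTbot (Submodule.nontrivial_iff_ne_bot.mp this)
end

section
/- Let M be a right R-module with S = End_R(M), and suppose for every f ∈ S there exists n ≥ 1 such that M = ker(f^n) ⊕ im(f^n) with both ker(f^n) and im(f^n) fully invariant submodules of M. Then M is centrally quasi-morphic: for every f ∈ S there exist g, h in the center of S with ker(f^n) = im(g) and im(f^n) = ker(h). -/
universe u v

/-- if for every endomorphism `f` some power gives a direct sum decomposition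
`M = ker (f^n) ⊕ im (f^n)` with both summands fully invariant, then `M` is centrally
quasi-morphic. -/
theorem stmt_18 {R : Type u} [Ring R] {M : Type v} [AddCommGroup M] [Module R M]
    (h : ∀ f : Module.End R M, ∃ n : ℕ, 1 ≤ n ∧
      IsCompl (LinearMap.ker (f ^ n)) (LinearMap.range (f ^ n)) ∧
      (∀ s : Module.End R M, (LinearMap.ker (f ^ n)).map s ≤ LinearMap.ker (f ^ n)) ∧
      (∀ s : Module.End R M, (LinearMap.range (f ^ n)).map s ≤ LinearMap.range (f ^ n))) :
    ∀ f : Module.End R M, ∃ n : ℕ, 1 ≤ n ∧ ∃ g h' : Module.End R M,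
      (∀ s : Module.End R M, Commute g s) ∧ (∀ s : Module.End R M, Commute h' s) ∧
      LinearMap.range g = LinearMap.ker (f ^ n) ∧
      LinearMap.ker h' = LinearMap.range (f ^ n) := by
  intro f
  obtain ⟨n, hn, hc, hK, hI⟩ := h f
  set K := LinearMap.ker (f ^ n) with hKdef
  set I := LinearMap.range (f ^ n) with hIdef
  -- projection onto K along I
  set p : Module.End R M := K.subtype ∘ₗ K.linearProjOfIsCompl I hc with hp
  have hpK : ∀ x : K, p x = x := fun x => by
    simp [hp, Submodule.projectionOnto_apply_left hc x]
    exact Submodule.projectionOnto_apply_left hc x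
  have hpI : ∀ x ∈ I, p x = 0 := fun x hx => by
    simp [hp, Submodule.projectionOnto_apply_of_mem_right hc hx]
    exact Submodule.projectionOnto_apply_of_mem_right hc hx
  have hmem : ∀ x : M, p x ∈ K := fun x => (K.linearProjOfIsCompl I hc x).2
  have hcomm : ∀ s : Module.End R M, Commute p s := by
    intro s
    ext x
    obtain ⟨k, i, hk, hi, rfl⟩ := Submodule.codisjoint_iff_exists_add_eq.mp hc.codisjoint x
    have hsk : s k ∈ K := hK s ⟨k, hk, rfl⟩
    have hsi : s i ∈ I := hI s ⟨i, hi, rfl⟩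
    have h1 : p (k + i) = k := by
      rw [map_add, hpK ⟨k, hk⟩, hpI i hi, add_zero]
    have h2 : p (s k + s i) = s k := by
      rw [map_add, hpK ⟨s k, hsk⟩, hpI _ hsi, add_zero]
    have hpk : p k = k := hpK ⟨k, hk⟩
    have hpi : p i = 0 := hpI i hi
    simp only [Module.End.mul_apply, map_add] at h1 h2 ⊢
    rw [h2, hpk, hpi, map_zero, add_zero]
  refine ⟨n, hn, p, p, hcomm, hcomm, ?_, ?_⟩
  · apply le_antisymm
    · rintro x ⟨y, rfl⟩; exact hmem y
    · intro x hx; exact ⟨x, hpK ⟨x, hx⟩⟩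
  · apply le_antisymm
    · intro x hx
      obtain ⟨k, i, hk, hi, rfl⟩ := Submodule.codisjoint_iff_exists_add_eq.mp hc.codisjoint x
      have : p (k + i) = k := by
        rw [map_add, hpK ⟨k, hk⟩, hpI i hi, add_zero]
      have hk0 : k = 0 := by rw [← this]; exact hx
      simpa [hk0, hIdef] using hi
    · intro x hx; exact hpI x hx
end

section
/- Let R = k[x]/(x²) for a field k, and let M = R as a right R-module. Then M is centrally quasi-morphic but not centrally morphic: for every f ∈ End_R(M) there exist central g, h ∈ End_R(M) with im(f) = ker(g) and ker(f) = im(h), yet there exists f ∈ End_R(M) for which no single central g satisfies both im(f) = ker(g) and ker(f) = im(g) with g arising from a central idempotent decomposition—concretely, multiplication by x̄ has image and kernel both equal to x̄R, which is not of the form eM for any idempotent e ∈ R. -/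
universe u

set_option synthInstance.maxHeartbeats 1000000
set_option maxHeartbeats 1000000

open Polynomial

/-- The ring `k[x]/(x²)`. -/
abbrev DualNumbersRing (k : Type u) [Field k] :=
  Polynomial k ⧸ Ideal.span {(Polynomial.X : Polynomial k) ^ 2}

/-- The image `x̄` of `x` in `k[x]/(x²)`. -/
noncomputable def xbar (k : Type u) [Field k] : DualNumbersRing k :=
  Ideal.Quotient.mk _ Polynomial.X

/-!
Every endomorphism `f` of `R_R` is multiplication by `a = f 1`, with image `aR` and kernel
`ann(a)`, and these maps commute with each other. The ring `R = k[x]/(x²)` is local with maximal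
ideal `x̄R`, where `x̄² = 0` and `x̄ ≠ 0`; hence `ann(x̄) = x̄R` and every nonzero non-unit generates
`x̄R`. So each `a` has a partner `c` (namely `0`, `1` or `x̄`) with `aR = ann(c)` and `ann(a) = cR`,
and multiplication by `c` serves as both `g` and `h`. Finally, an idempotent generating `x̄R` would
be nilpotent, hence zero.
-/

namespace Module.End

variable {R : Type*} [CommRing R]

theorem eq_smul_id (f : Module.End R R) : f = f 1 • LinearMap.id :=
  LinearMap.ext_ring (by simp)

theorem commute_of_commRing (f g : Module.End R R) : Commute f g :=
  LinearMap.ext_ring <| by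
    change f (g 1) = g (f 1)
    rw [eq_smul_id f, eq_smul_id g]
    simp [mul_comm]

theorem range_smul_id (a : R) :
    LinearMap.range (a • LinearMap.id : Module.End R R) = Ideal.span {a} := by
  ext z
  simp [Ideal.mem_span_singleton', mul_comm]

theorem ker_smul_id (a : R) :
    LinearMap.ker (a • LinearMap.id : Module.End R R) = (Ideal.span {a}).annihilator := by
  ext z
  simp [mul_comm]

theorem range_eq_ker_and_ker_eq_range_of_span_eq_annihilator (f : Module.End R R) {c : R}
    (hrange : Ideal.span {f 1} = (Ideal.span {c}).annihilator)
    (hker : (Ideal.span {f 1}).annihilator = Ideal.span {c}) :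
    LinearMap.range f = LinearMap.ker (c • LinearMap.id) ∧
      LinearMap.ker f = LinearMap.range (c • LinearMap.id) := by
  rw [eq_smul_id f, range_smul_id, ker_smul_id, ker_smul_id, range_smul_id]
  exact ⟨hrange, hker⟩

end Module.End

section SquareZeroMaximalIdeal

variable {R : Type*} [CommRing R] {x : R}

theorem not_exists_isIdempotentElem_span_eq_of_mul_self_eq_zero (hx0 : x * x = 0) (hx : x ≠ 0) :
    ¬ ∃ e : R, IsIdempotentElem e ∧ Ideal.span {x} = Ideal.span {e} := by
  rintro ⟨e, he, hspan⟩
  obtain ⟨c, rfl⟩ := Ideal.mem_span_singleton'.mp (hspan ▸ Ideal.mem_span_singleton_self e)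
  have hnil : IsNilpotent (c * x) := ⟨2, by rw [sq, mul_mul_mul_comm, hx0, mul_zero]⟩
  rw [he.eq_zero_of_isNilpotent hnil, Ideal.span_singleton_eq_bot.mpr rfl,
    Ideal.span_singleton_eq_bot] at hspan
  exact hx hspan

theorem annihilator_span_eq_span
    (hx0 : x * x = 0) (hR : ∀ a : R, IsUnit a ∨ a ∈ Ideal.span {x})
    (hx : x ≠ 0) :
    (Ideal.span {x}).annihilator = Ideal.span {x} := by
  ext a
  rw [Submodule.mem_annihilator_span_singleton, smul_eq_mul]
  refine ⟨fun ha => (hR a).resolve_left fun hu => hx (hu.mul_right_eq_zero.mp ha), fun ha => ?_⟩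
  obtain ⟨b, rfl⟩ := Ideal.mem_span_singleton'.mp ha
  rw [mul_assoc, hx0, mul_zero]

theorem span_eq_span_of_mem_of_ne_zero
    (hx0 : x * x = 0) (hR : ∀ a : R, IsUnit a ∨ a ∈ Ideal.span {x})
    {a : R} (ha : a ∈ Ideal.span {x}) (ha0 : a ≠ 0) :
    Ideal.span {a} = Ideal.span {x} := by
  obtain ⟨b, rfl⟩ := Ideal.mem_span_singleton'.mp ha
  have hb : IsUnit b := (hR b).resolve_right fun hb => ha0 <| by
    obtain ⟨c, rfl⟩ := Ideal.mem_span_singleton'.mp hb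
    rw [mul_assoc, hx0, mul_zero]
  rw [mul_comm, Ideal.span_singleton_mul_right_unit hb]

theorem exists_span_eq_annihilator
    (hx0 : x * x = 0) (hR : ∀ a : R, IsUnit a ∨ a ∈ Ideal.span {x})
    (hx : x ≠ 0) (a : R) :
    ∃ c : R, Ideal.span {a} = (Ideal.span {c}).annihilator ∧
      (Ideal.span {a}).annihilator = Ideal.span {c} := by
  rcases hR a with hu | ha
  · refine ⟨0, ?_, ?_⟩ <;> ext z <;>
      simp only [Submodule.mem_annihilator_span_singleton, smul_eq_mul] <;>
      simp [Ideal.span_singleton_eq_top.mpr hu, hu.mul_left_eq_zero]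
  by_cases ha0 : a = 0
  · refine ⟨1, ?_, ?_⟩ <;> ext z <;>
      simp only [Submodule.mem_annihilator_span_singleton, smul_eq_mul] <;> simp [ha0]
  · refine ⟨x, ?_, ?_⟩ <;>
      rw [span_eq_span_of_mem_of_ne_zero hx0 hR ha ha0, annihilator_span_eq_span hx0 hR hx]

end SquareZeroMaximalIdeal

section DualNumbersRing

variable (k : Type u) [Field k]

theorem xbar_mul_self : xbar k * xbar k = 0 := by
  rw [xbar, ← map_mul, ← sq, Ideal.Quotient.eq_zero_iff_mem]
  exact Ideal.subset_span rfl

theorem xbar_ne_zero : xbar k ≠ 0 := by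
  rw [xbar, Ne, Ideal.Quotient.eq_zero_iff_mem, Ideal.mem_span_singleton]
  intro h
  simpa using X_pow_dvd_iff.mp h 1 one_lt_two

theorem isUnit_or_mem_span_xbar (a : DualNumbersRing k) :
    IsUnit a ∨ a ∈ Ideal.span {xbar k} := by
  obtain ⟨p, rfl⟩ := Ideal.Quotient.mk_surjective a
  obtain ⟨q, hq⟩ := X_dvd_sub_C (p := p)
  have hp : Ideal.Quotient.mk _ p =
      Ideal.Quotient.mk _ (C (p.coeff 0)) + xbar k * Ideal.Quotient.mk _ q := by
    rw [xbar, ← map_mul, ← hq, ← map_add, add_sub_cancel]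
  rw [hp]
  by_cases h0 : p.coeff 0 = 0
  · right
    rw [h0, C_0, map_zero, zero_add]
    exact Ideal.mem_span_singleton'.mpr ⟨_, mul_comm _ _⟩
  · left
    have hnil : IsNilpotent (xbar k * Ideal.Quotient.mk _ q) :=
      ⟨2, by rw [mul_pow, sq (xbar k), xbar_mul_self, zero_mul]⟩
    exact hnil.isUnit_add_left_of_commute ((isUnit_C.mpr (Ne.isUnit h0)).map _)
      (Commute.all _ _)

end DualNumbersRing

/-- over `R = k[x]/(x²)`, the module `M = R` is centrally quasi-morphic,
but multiplication by `x̄` has image and kernel both equal to `x̄R`, which is not of the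
form `eR` for any idempotent `e ∈ R`; in particular `M` is not centrally morphic in the
idempotent-decomposition sense. -/
theorem stmt_19 (k : Type u) [Field k] :
    (∀ f : Module.End (DualNumbersRing k) (DualNumbersRing k),
      ∃ g h : Module.End (DualNumbersRing k) (DualNumbersRing k),
        (∀ s, Commute g s) ∧ (∀ s, Commute h s) ∧
        LinearMap.range f = LinearMap.ker g ∧
        LinearMap.ker f = LinearMap.range h) ∧
    (LinearMap.range
        (xbar k • (LinearMap.id : DualNumbersRing k →ₗ[DualNumbersRing k] DualNumbersRing k))
      = Ideal.span {xbar k}) ∧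
    (LinearMap.ker
        (xbar k • (LinearMap.id : DualNumbersRing k →ₗ[DualNumbersRing k] DualNumbersRing k))
      = Ideal.span {xbar k}) ∧
    ¬ ∃ e : DualNumbersRing k, IsIdempotentElem e ∧
        (Ideal.span {xbar k} : Ideal (DualNumbersRing k)) = Ideal.span {e} := by
  have hx0 := xbar_mul_self k
  have hR := isUnit_or_mem_span_xbar k
  refine ⟨fun f => ?_, Module.End.range_smul_id _, ?_,
    not_exists_isIdempotentElem_span_eq_of_mul_self_eq_zero hx0 (xbar_ne_zero k)⟩
  · obtain ⟨c, hrange, hker⟩ := exists_span_eq_annihilator hx0 hR (xbar_ne_zero k) (f 1)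
    exact ⟨c • LinearMap.id, c • LinearMap.id, Module.End.commute_of_commRing _,
      Module.End.commute_of_commRing _,
      f.range_eq_ker_and_ker_eq_range_of_span_eq_annihilator hrange hker⟩
  · rw [Module.End.ker_smul_id, annihilator_span_eq_span hx0 hR (xbar_ne_zero k)]
end
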